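/- Let 0 < α_min ≤ α_max < 1 and T > 0. Then there exists a constant C ∈ (0,∞), independent of τ and i, such that for every τ ∈ (0,1], every integer i ≥ 1 with (i+1)τ ≤ T, every α ∈ [α_min, α_max], and every σ ∈ [1/2, 1], the function a_i(α,σ;τ) := (τ^{−α}/Γ(2−α))·( ((i+σ+1)^{2−α} − 2(i+σ)^{2−α} + (i+σ−1)^{2−α})/(2−α) − ((i+σ+1)^{1−α} − 2(i+σ)^{1−α} + (i+σ−1)^{1−α})/2 ) satisfies |∂_α a_i(α,σ;τ)| + |∂_σ a_i(α,σ;τ)| ≤ C·(1 + |log((i+1)τ)|)·((i+1)τ)^{−α_max}. -/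

import Mathlib

/-!
With `c = i + σ`, `a_i` is `Γ(2-α)⁻¹` times the central second difference at `c` of
`v ↦ τ^{-α} (v^{2-α}/(2-α) - v^{1-α}/2)`. Both partial derivatives commute with the second
difference, and `∂_α (τ^{-α} v^{p-α}) = -log (vτ) τ^{-α} v^{p-α}`, so they are combinations of
second differences of `v^q` and `log (vτ) v^q` with `q ∈ [-α, 2-α]`, whose coefficients are
bounded because `1/Γ` is smooth on `[α_min, α_max]`. A second difference is at most twice the
supremum of the second derivative on `[c-1, c+1]`, here `O((1 + |log (vτ)|) (c-1)^{-α})`.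
Finally `c - 1 ≥ (i+1)/4` gives `τ^{-α} (c-1)^{-α} ≤ 4 ((i+1)τ)^{-α} ≤ 4 max(1,T) ((i+1)τ)^{-α_max}`
and `|log (vτ)| ≤ |log ((i+1)τ)| + log 4`.
-/

/-- The i-th interior normalized weight `a_i(α,σ;τ)` of the second-order
approximation of the Caputo derivative of order `α`, with time step `τ` and
intermediate parameter `σ`. -/
noncomputable def ai (α σ τ : ℝ) (i : ℕ) : ℝ :=
  τ ^ (-α) / Real.Gamma (2 - α) *
    ((((i : ℝ) + σ + 1) ^ (2 - α) - 2 * ((i : ℝ) + σ) ^ (2 - α)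
        + ((i : ℝ) + σ - 1) ^ (2 - α)) / (2 - α)
      - (((i : ℝ) + σ + 1) ^ (1 - α) - 2 * ((i : ℝ) + σ) ^ (1 - α)
        + ((i : ℝ) + σ - 1) ^ (1 - α)) / 2)

open Real Set

noncomputable def secondDiff (f : ℝ → ℝ) (c : ℝ) : ℝ := f (c + 1) - 2 * f c + f (c - 1)

section SecondDiff

variable {f f' f'' : ℝ → ℝ} {c : ℝ}

theorem abs_secondDiff_le {M : ℝ}
    (hf : ∀ v ∈ Icc (c - 1) (c + 1), HasDerivAt f (f' v) v)
    (hf' : ∀ v ∈ Icc (c - 1) (c + 1), HasDerivAt f' (f'' v) v)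
    (hM : ∀ v ∈ Icc (c - 1) (c + 1), |f'' v| ≤ M) :
    |secondDiff f c| ≤ 2 * M := by
  have hright : Icc c (c + 1) ⊆ Icc (c - 1) (c + 1) := Icc_subset_Icc (by linarith) le_rfl
  have hleft : Icc (c - 1) c ⊆ Icc (c - 1) (c + 1) := Icc_subset_Icc le_rfl (by linarith)
  have hcont : ContinuousOn f (Icc (c - 1) (c + 1)) := fun v hv =>
    (hf v hv).continuousAt.continuousWithinAt
  obtain ⟨vr, hvr, hslopeR⟩ := exists_hasDerivAt_eq_slope f f' (by linarith : c < c + 1)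
    (hcont.mono hright) fun v hv => hf v (hright (Ioo_subset_Icc_self hv))
  obtain ⟨vl, hvl, hslopeL⟩ := exists_hasDerivAt_eq_slope f f' (by linarith : c - 1 < c)
    (hcont.mono hleft) fun v hv => hf v (hleft (Ioo_subset_Icc_self hv))
  have hmemR := hright (Ioo_subset_Icc_self hvr)
  have hmemL := hleft (Ioo_subset_Icc_self hvl)
  have hsecant : secondDiff f c = f' vr - f' vl := by
    rw [secondDiff, hslopeR, hslopeL]; ring_nf
  have hlip : |f' vr - f' vl| ≤ M * |vr - vl| :=
    (convex_Icc _ _).norm_image_sub_le_of_norm_hasDerivWithin_le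
      (fun v hv => (hf' v hv).hasDerivWithinAt) hM hmemL hmemR
  have hdist : |vr - vl| ≤ 2 :=
    abs_le.2 ⟨by linarith [hmemR.1, hmemL.2], by linarith [hmemR.2, hmemL.1]⟩
  have hM0 : 0 ≤ M := (abs_nonneg _).trans (hM c ⟨by linarith, by linarith⟩)
  rw [hsecant]
  linarith [mul_le_mul_of_nonneg_left hdist hM0]

theorem hasDerivAt_secondDiff (hf : ∀ v ∈ Icc (c - 1) (c + 1), HasDerivAt f (f' v) v) :
    HasDerivAt (secondDiff f) (secondDiff f' c) c :=
  (((hf _ ⟨by linarith, le_rfl⟩).comp_add_const c 1).sub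
    ((hf c ⟨by linarith, by linarith⟩).const_mul 2)).add
    ((hf _ ⟨le_rfl, by linarith⟩).comp_sub_const c 1)

theorem hasDerivAt_secondDiff_param {F : ℝ → ℝ → ℝ} {α : ℝ}
    (hF : ∀ v ∈ Icc (c - 1) (c + 1), HasDerivAt (fun a => F a v) (f' v) α) :
    HasDerivAt (fun a => secondDiff (F a) c) (secondDiff f' c) α :=
  ((hF _ ⟨by linarith, le_rfl⟩).sub
    ((hF c ⟨by linarith, by linarith⟩).const_mul 2)).add (hF _ ⟨le_rfl, by linarith⟩)

end SecondDiff

section PowerBounds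

variable {τ q c v : ℝ}

theorem abs_mul_sub_one_le_two (hq : q ∈ Icc (-1 : ℝ) 2) : |q * (q - 1)| ≤ 2 :=
  abs_le.2 ⟨by nlinarith [sq_nonneg (2 * q - 1)], by nlinarith [hq.1, hq.2]⟩

theorem abs_secondDiff_rpow_le (hq : q ∈ Icc (-1 : ℝ) 2) (hc : 0 < c - 1) :
    |secondDiff (fun v => v ^ q) c| ≤ 2 * (2 * (c - 1) ^ (q - 2)) := by
  refine abs_secondDiff_le (f' := fun v => q * v ^ (q - 1))
    (f'' := fun v => q * ((q - 1) * v ^ (q - 1 - 1))) (fun v hv => ?_) (fun v hv => ?_)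
    (fun v hv => ?_)
  · exact hasDerivAt_rpow_const (Or.inl (by linarith [hv.1]))
  · exact (hasDerivAt_rpow_const (Or.inl (by linarith [hv.1]))).const_mul q
  · have hv0 : 0 < v := by linarith [hv.1]
    rw [← mul_assoc, abs_mul, abs_of_pos (rpow_pos_of_pos hv0 _), sub_sub, one_add_one_eq_two]
    exact mul_le_mul (abs_mul_sub_one_le_two hq)
      (rpow_le_rpow_of_nonpos hc hv.1 (by linarith [hq.2])) (by positivity) zero_le_two

theorem hasDerivAt_log_mul_rpow (hτ : τ ≠ 0) (hv : 0 < v) :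
    HasDerivAt (fun v => log (v * τ) * v ^ q)
      (v ^ (q - 1) + q * (log (v * τ) * v ^ (q - 1))) v := by
  have hlog : HasDerivAt (fun v => log (v * τ)) v⁻¹ v := by
    refine (((hasDerivAt_id' v).mul_const τ).log (mul_ne_zero hv.ne' hτ)).congr_deriv ?_
    field_simp
  refine (hlog.mul (hasDerivAt_rpow_const (p := q) (Or.inl hv.ne'))).congr_deriv ?_
  rw [rpow_sub_one hv.ne']
  field_simp

theorem abs_secondDiff_log_mul_rpow_le {Λ : ℝ} (hτ : 0 < τ) (hq : q ∈ Icc (-1 : ℝ) 2)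
    (hc : 0 < c - 1) (hΛ : ∀ v ∈ Icc (c - 1) (c + 1), |log (v * τ)| ≤ Λ) :
    |secondDiff (fun v => log (v * τ) * v ^ q) c| ≤ 2 * ((3 + 2 * Λ) * (c - 1) ^ (q - 2)) := by
  refine abs_secondDiff_le (f' := fun v => v ^ (q - 1) + q * (log (v * τ) * v ^ (q - 1)))
    (f'' := fun v => (q - 1) * v ^ (q - 1 - 1) + q * (v ^ (q - 1 - 1)
      + (q - 1) * (log (v * τ) * v ^ (q - 1 - 1))))
    (fun v hv => ?_) (fun v hv => ?_) (fun v hv => ?_)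
  · exact hasDerivAt_log_mul_rpow hτ.ne' (by linarith [hv.1])
  · have hv0 : 0 < v := by linarith [hv.1]
    exact (hasDerivAt_rpow_const (Or.inl hv0.ne')).add
      ((hasDerivAt_log_mul_rpow hτ.ne' hv0).const_mul q)
  · have hv0 : 0 < v := by linarith [hv.1]
    have hcoef : |2 * q - 1 + q * (q - 1) * log (v * τ)| ≤ 3 + 2 * Λ := by
      have hΛv := hΛ v hv
      have hlin : |2 * q - 1| ≤ 3 := abs_le.2 ⟨by linarith [hq.1], by linarith [hq.2]⟩
      calc _ ≤ |2 * q - 1| + |q * (q - 1)| * |log (v * τ)| := by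
              rw [← abs_mul]; exact abs_add_le _ _
        _ ≤ 3 + 2 * Λ := by
              gcongr
              exact abs_mul_sub_one_le_two hq
    calc _ = |2 * q - 1 + q * (q - 1) * log (v * τ)| * v ^ (q - 2) := by
            rw [← abs_of_pos (rpow_pos_of_pos hv0 (q - 2)), ← abs_mul, sub_sub, one_add_one_eq_two]
            ring_nf
      _ ≤ (3 + 2 * Λ) * (c - 1) ^ (q - 2) :=
            mul_le_mul hcoef (rpow_le_rpow_of_nonpos hc hv.1 (by linarith [hq.2])) (by positivity)
              ((abs_nonneg _).trans hcoef)

theorem rpow_le_four_mul_rpow {w s t : ℝ} (hw : 1 / 2 ≤ w) (hst : s ≤ t) (hts : t - 2 ≤ s) :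
    w ^ s ≤ 4 * w ^ t := by
  have hw0 : 0 < w := by linarith
  have hhalf : w ^ (s - t) ≤ (1 / 2 : ℝ) ^ (s - t) :=
    rpow_le_rpow_of_nonpos (by norm_num) hw (by linarith)
  have hfour : (1 / 2 : ℝ) ^ (s - t) ≤ 4 := by
    rw [one_div, inv_rpow zero_le_two, ← rpow_neg zero_le_two]
    calc (2 : ℝ) ^ (-(s - t)) ≤ 2 ^ (2 : ℝ) := rpow_le_rpow_of_exponent_le one_le_two (by linarith)
      _ = 4 := by norm_num
  calc w ^ s = w ^ (s - t) * w ^ t := by rw [← rpow_add hw0]; ring_nf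
    _ ≤ 4 * w ^ t := by gcongr; exact hhalf.trans hfour

end PowerBounds

noncomputable def caputoNode (α τ v : ℝ) : ℝ :=
  τ ^ (-α) * (v ^ (2 - α) / (2 - α) - v ^ (1 - α) / 2)

theorem ai_eq_secondDiff (α σ τ : ℝ) (i : ℕ) :
    ai α σ τ i = (Gamma (2 - α))⁻¹ * secondDiff (caputoNode α τ) (i + σ) := by
  simp only [ai, secondDiff, caputoNode]
  ring

section CaputoNode

variable {α τ v : ℝ}

theorem hasDerivAt_caputoNode (hα : α ≠ 2) (hv : 0 < v) :
    HasDerivAt (caputoNode α τ) (τ ^ (-α) * (v ^ (1 - α) - (1 - α) / 2 * v ^ (-α))) v := by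
  have h2 : (2 : ℝ) - α ≠ 0 := sub_ne_zero.2 (Ne.symm hα)
  refine ((((hasDerivAt_rpow_const (p := 2 - α) (Or.inl hv.ne')).div_const (2 - α)).sub
    ((hasDerivAt_rpow_const (p := 1 - α) (Or.inl hv.ne')).div_const 2)).const_mul
    (τ ^ (-α))).congr_deriv ?_
  rw [show (2 : ℝ) - α - 1 = 1 - α by ring, show (1 : ℝ) - α - 1 = -α by ring]
  field_simp

theorem hasDerivAt_rpow_neg_mul_rpow_sub {p : ℝ} (hτ : 0 < τ) (hv : 0 < v) :
    HasDerivAt (fun a => τ ^ (-a) * v ^ (p - a)) (-log (v * τ) * (τ ^ (-α) * v ^ (p - α))) α := by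
  refine (((hasDerivAt_id' α).neg.const_rpow hτ).mul
    (((hasDerivAt_id' α).const_sub p).const_rpow hv)).congr_deriv ?_
  simp only [Pi.neg_apply, log_mul hv.ne' hτ.ne']
  ring

theorem hasDerivAt_caputoNode_order (hα : α ≠ 2) (hτ : 0 < τ) (hv : 0 < v) :
    HasDerivAt (fun a => caputoNode a τ v)
      (τ ^ (-α) * (v ^ (2 - α) / (2 - α) ^ 2 - log (v * τ) * v ^ (2 - α) / (2 - α)
        + log (v * τ) * v ^ (1 - α) / 2)) α := by
  have h2 : (2 : ℝ) - α ≠ 0 := sub_ne_zero.2 (Ne.symm hα)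
  have hnode : (fun a => caputoNode a τ v) =
      fun a => (τ ^ (-a) * v ^ (2 - a)) / (2 - a) - τ ^ (-a) * v ^ (1 - a) / 2 := by
    ext a; simp only [caputoNode]; ring
  rw [hnode]
  refine (((hasDerivAt_rpow_neg_mul_rpow_sub hτ hv).div ((hasDerivAt_id' α).const_sub 2) h2).sub
    ((hasDerivAt_rpow_neg_mul_rpow_sub hτ hv).div_const 2)).congr_deriv ?_
  field_simp
  ring

end CaputoNode

theorem contDiff_inv_Gamma {n : WithTop ℕ∞} : ContDiff ℝ n fun x : ℝ => (Gamma x)⁻¹ := by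
  have hre : (fun x : ℝ => ((Complex.Gamma x)⁻¹).re) = fun x => (Gamma x)⁻¹ := by
    ext x
    rw [Complex.Gamma_ofReal, ← Complex.ofReal_inv, Complex.ofReal_re]
  exact hre ▸ (Complex.differentiable_one_div_Gamma.contDiff (n := n)).real_of_complex

theorem contDiff_inv_Gamma_two_sub {n : WithTop ℕ∞} :
    ContDiff ℝ n fun a : ℝ => (Gamma (2 - a))⁻¹ :=
  contDiff_inv_Gamma.comp (contDiff_const.sub contDiff_id)

theorem ContDiff.exists_abs_le_and_abs_deriv_le {f : ℝ → ℝ} (hf : ContDiff ℝ 1 f) {s : Set ℝ}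
    (hs : IsCompact s) : ∃ B > 0, ∀ x ∈ s, |f x| ≤ B ∧ |deriv f x| ≤ B := by
  obtain ⟨C, hC⟩ := hs.exists_bound_of_continuousOn
    (hf.continuous.abs.add (hf.continuous_deriv le_rfl).abs).continuousOn
  refine ⟨max C 1, by positivity, fun x hx => ?_⟩
  have hCx : |f x| + |deriv f x| ≤ C := by
    simpa [abs_of_nonneg (add_nonneg (abs_nonneg (f x)) (abs_nonneg (deriv f x)))] using hC x hx
  constructor <;> linarith [le_max_left C 1, abs_nonneg (f x), abs_nonneg (deriv f x)]

section DerivAi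

variable {α σ τ : ℝ} {i : ℕ}

theorem hasDerivAt_ai_sigma (hα : α ≠ 2) (hc : 0 < (i : ℝ) + σ - 1) :
    HasDerivAt (fun s => ai α s τ i) ((Gamma (2 - α))⁻¹ * (τ ^ (-α) *
      (secondDiff (· ^ (1 - α)) (i + σ) - (1 - α) / 2 * secondDiff (· ^ (-α)) (i + σ)))) σ := by
  have hnode := hasDerivAt_secondDiff (c := i + σ) (f := caputoNode α τ) fun v hv =>
    hasDerivAt_caputoNode hα (hc.trans_le hv.1)
  simp only [ai_eq_secondDiff]
  refine ((hnode.comp_const_add (i : ℝ) σ).const_mul _).congr_deriv ?_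
  simp only [secondDiff]
  ring

theorem hasDerivAt_ai_order (hα : α ≠ 2) (hτ : 0 < τ) (hc : 0 < (i : ℝ) + σ - 1) :
    HasDerivAt (fun a => ai a σ τ i)
      (deriv (fun a => (Gamma (2 - a))⁻¹) α * (τ ^ (-α) *
          (secondDiff (· ^ (2 - α)) (i + σ) / (2 - α) - secondDiff (· ^ (1 - α)) (i + σ) / 2))
        + (Gamma (2 - α))⁻¹ * (τ ^ (-α) *
          (secondDiff (· ^ (2 - α)) (i + σ) / (2 - α) ^ 2
            - secondDiff (fun v => log (v * τ) * v ^ (2 - α)) (i + σ) / (2 - α)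
            + secondDiff (fun v => log (v * τ) * v ^ (1 - α)) (i + σ) / 2))) α := by
  have hg : DifferentiableAt ℝ (fun a => (Gamma (2 - a))⁻¹) α :=
    (contDiff_inv_Gamma_two_sub (n := 1)).differentiable one_ne_zero α
  have hnode := hasDerivAt_secondDiff_param (c := i + σ) (F := fun a => caputoNode a τ)
    fun v hv => hasDerivAt_caputoNode_order hα hτ (hc.trans_le hv.1)
  simp only [ai_eq_secondDiff]
  refine (hg.hasDerivAt.mul hnode).congr_deriv ?_
  simp only [secondDiff, caputoNode]
  ring

end DerivAi

theorem abs_div_le_abs_of_one_le {x y : ℝ} (hy : 1 ≤ y) : |x / y| ≤ |x| := by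
  rw [abs_div, abs_of_pos (show 0 < y by linarith)]
  exact div_le_self (abs_nonneg x) hy

section Bounds

variable {α τ c q Λ : ℝ}

theorem abs_secondDiff_rpow_le_rpow_neg (hα : α ∈ Icc (0 : ℝ) 1) (hc : 1 / 2 ≤ c - 1)
    (hq : q ∈ Icc (-α) (2 - α)) :
    |secondDiff (· ^ q) c| ≤ 16 * (c - 1) ^ (-α) := by
  have hq' : q ∈ Icc (-1 : ℝ) 2 := ⟨by linarith [hα.2, hq.1], by linarith [hα.1, hq.2]⟩
  calc _ ≤ 2 * (2 * (c - 1) ^ (q - 2)) := abs_secondDiff_rpow_le hq' (by linarith)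
    _ ≤ 2 * (2 * (4 * (c - 1) ^ (-α))) := by
        gcongr
        exact rpow_le_four_mul_rpow hc (by linarith [hq.2]) (by linarith [hq.1])
    _ = 16 * (c - 1) ^ (-α) := by ring

theorem abs_secondDiff_log_mul_rpow_le_rpow_neg (hτ : 0 < τ) (hα : α ∈ Icc (0 : ℝ) 1)
    (hc : 1 / 2 ≤ c - 1) (hq : q ∈ Icc (-α) (2 - α))
    (hΛ : ∀ v ∈ Icc (c - 1) (c + 1), |log (v * τ)| ≤ Λ) :
    |secondDiff (fun v => log (v * τ) * v ^ q) c| ≤ 8 * (3 + 2 * Λ) * (c - 1) ^ (-α) := by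
  have hq' : q ∈ Icc (-1 : ℝ) 2 := ⟨by linarith [hα.2, hq.1], by linarith [hα.1, hq.2]⟩
  have hΛ0 : 0 ≤ Λ := (abs_nonneg _).trans (hΛ c ⟨by linarith, by linarith⟩)
  calc _ ≤ 2 * ((3 + 2 * Λ) * (c - 1) ^ (q - 2)) :=
        abs_secondDiff_log_mul_rpow_le hτ hq' (by linarith) hΛ
    _ ≤ 2 * ((3 + 2 * Λ) * (4 * (c - 1) ^ (-α))) := by
        gcongr
        exact rpow_le_four_mul_rpow hc (by linarith [hq.2]) (by linarith [hq.1])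
    _ = 8 * (3 + 2 * Λ) * (c - 1) ^ (-α) := by ring

end Bounds

section BoundsAi

variable {α σ τ B Λ : ℝ} {i : ℕ}

theorem abs_deriv_ai_sigma_le (hτ : 0 < τ) (hα : α ∈ Icc (0 : ℝ) 1)
    (hc : 1 / 2 ≤ (i : ℝ) + σ - 1) (hg : |(Gamma (2 - α))⁻¹| ≤ B) :
    |deriv (fun s => ai α s τ i) σ| ≤ 32 * B * (τ ^ (-α) * ((i : ℝ) + σ - 1) ^ (-α)) := by
  set W := ((i : ℝ) + σ - 1) ^ (-α)
  have hD : ∀ q ∈ Icc (-α) (2 - α), |secondDiff (· ^ q) (i + σ)| ≤ 16 * W := fun q hq =>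
    abs_secondDiff_rpow_le_rpow_neg hα (by simpa using hc) hq
  have hsum : |secondDiff (· ^ (1 - α)) (i + σ) - (1 - α) / 2 * secondDiff (· ^ (-α)) (i + σ)|
      ≤ 32 * W := by
    have hcoef : |(1 - α) / 2| ≤ 1 := abs_le.2 ⟨by linarith [hα.2], by linarith [hα.1]⟩
    calc _ ≤ |secondDiff (· ^ (1 - α)) (i + σ)|
            + |(1 - α) / 2| * |secondDiff (· ^ (-α)) (i + σ)| := by
          rw [← abs_mul]; exact abs_sub _ _
      _ ≤ 16 * W + 1 * (16 * W) := by
          gcongr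
          · exact hD _ ⟨by linarith [hα.2], by linarith⟩
          · exact hD _ ⟨le_rfl, by linarith⟩
      _ = 32 * W := by ring
  rw [(hasDerivAt_ai_sigma (by linarith [hα.2]) (by linarith)).deriv, abs_mul, abs_mul,
    abs_of_pos (rpow_pos_of_pos hτ _)]
  calc _ ≤ B * (τ ^ (-α) * (32 * W)) := by gcongr; exact (abs_nonneg _).trans hg
    _ = 32 * B * (τ ^ (-α) * W) := by ring

theorem abs_deriv_ai_order_le (hτ : 0 < τ) (hα : α ∈ Icc (0 : ℝ) 1)
    (hc : 1 / 2 ≤ (i : ℝ) + σ - 1) (hg : |(Gamma (2 - α))⁻¹| ≤ B)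
    (hg' : |deriv (fun a => (Gamma (2 - a))⁻¹) α| ≤ B)
    (hΛ : ∀ v ∈ Icc ((i : ℝ) + σ - 1) ((i : ℝ) + σ + 1), |log (v * τ)| ≤ Λ) :
    |deriv (fun a => ai a σ τ i) α| ≤ 32 * B * (3 + Λ) * (τ ^ (-α) * ((i : ℝ) + σ - 1) ^ (-α)) := by
  set W := ((i : ℝ) + σ - 1) ^ (-α)
  have h2α : 1 ≤ 2 - α := by linarith [hα.2]
  have hD : ∀ q ∈ Icc (-α) (2 - α), |secondDiff (· ^ q) (i + σ)| ≤ 16 * W := fun q hq =>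
    abs_secondDiff_rpow_le_rpow_neg hα (by simpa using hc) hq
  have hL : ∀ q ∈ Icc (-α) (2 - α),
      |secondDiff (fun v => log (v * τ) * v ^ q) (i + σ)| ≤ 8 * (3 + 2 * Λ) * W := fun q hq =>
    abs_secondDiff_log_mul_rpow_le_rpow_neg hτ hα (by simpa using hc) hq hΛ
  have hq₂ : 2 - α ∈ Icc (-α) (2 - α) := ⟨by linarith, le_rfl⟩
  have hq₁ : 1 - α ∈ Icc (-α) (2 - α) := ⟨by linarith, by linarith⟩
  have hvalue : |secondDiff (· ^ (2 - α)) (i + σ) / (2 - α) - secondDiff (· ^ (1 - α)) (i + σ) / 2|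
      ≤ 32 * W :=
    calc _ ≤ |secondDiff (· ^ (2 - α)) (i + σ)| + |secondDiff (· ^ (1 - α)) (i + σ)| :=
          (abs_sub _ _).trans (add_le_add (abs_div_le_abs_of_one_le h2α)
            (abs_div_le_abs_of_one_le one_le_two))
      _ ≤ 16 * W + 16 * W := add_le_add (hD _ hq₂) (hD _ hq₁)
      _ = 32 * W := by ring
  have hslope : |secondDiff (· ^ (2 - α)) (i + σ) / (2 - α) ^ 2
        - secondDiff (fun v => log (v * τ) * v ^ (2 - α)) (i + σ) / (2 - α)
        + secondDiff (fun v => log (v * τ) * v ^ (1 - α)) (i + σ) / 2| ≤ 32 * (2 + Λ) * W :=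
    calc _ ≤ |secondDiff (· ^ (2 - α)) (i + σ)|
            + |secondDiff (fun v => log (v * τ) * v ^ (2 - α)) (i + σ)|
            + |secondDiff (fun v => log (v * τ) * v ^ (1 - α)) (i + σ)| :=
          (abs_add_le _ _).trans (add_le_add ((abs_sub _ _).trans (add_le_add
            (abs_div_le_abs_of_one_le (one_le_pow₀ h2α)) (abs_div_le_abs_of_one_le h2α)))
            (abs_div_le_abs_of_one_le one_le_two))
      _ ≤ 16 * W + 8 * (3 + 2 * Λ) * W + 8 * (3 + 2 * Λ) * W :=
          add_le_add (add_le_add (hD _ hq₂) (hL _ hq₂)) (hL _ hq₁)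
      _ = 32 * (2 + Λ) * W := by ring
  rw [(hasDerivAt_ai_order (by linarith) hτ (by linarith)).deriv]
  have hτα : 0 < τ ^ (-α) := rpow_pos_of_pos hτ _
  calc _ ≤ _ := abs_add_le _ _
    _ = _ := by rw [abs_mul, abs_mul, abs_mul, abs_mul, abs_of_pos hτα]
    _ ≤ B * (τ ^ (-α) * (32 * W)) + B * (τ ^ (-α) * (32 * (2 + Λ) * W)) := by
        have hB0 : 0 ≤ B := (abs_nonneg _).trans hg
        gcongr
    _ = 32 * B * (3 + Λ) * (τ ^ (-α) * W) := by ring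

end BoundsAi

theorem abs_log_le_abs_log_add_log {x y K : ℝ} (hx : 0 < x) (hK : 0 < K) (hlow : x / K ≤ y)
    (hup : y ≤ K * x) : |log y| ≤ |log x| + log K := by
  have hy : 0 < y := (div_pos hx hK).trans_le hlow
  have h₁ : log y ≤ log K + log x := by
    rw [← log_mul hK.ne' hx.ne']; exact log_le_log hy hup
  have h₂ : log x - log K ≤ log y := by
    rw [← log_div hx.ne' hK.ne']; exact log_le_log (div_pos hx hK) hlow
  rw [abs_le]
  constructor <;> linarith [neg_abs_le (log x), le_abs_self (log x)]

theorem rpow_neg_le_four_mul_rpow_neg {x y α : ℝ} (hx : 0 < x) (hxy : x / 4 ≤ y)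
    (hα : α ∈ Icc (0 : ℝ) 1) : y ^ (-α) ≤ 4 * x ^ (-α) := by
  calc y ^ (-α) ≤ (x / 4) ^ (-α) := rpow_le_rpow_of_nonpos (by positivity) hxy (by linarith [hα.1])
    _ = 4 ^ α * x ^ (-α) := by
        rw [div_rpow hx.le (by norm_num), rpow_neg (by norm_num : (0 : ℝ) ≤ 4)]
        field_simp
    _ ≤ 4 * x ^ (-α) := by
        gcongr
        calc (4 : ℝ) ^ α ≤ 4 ^ (1 : ℝ) := rpow_le_rpow_of_exponent_le (by norm_num) hα.2
          _ = 4 := rpow_one 4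

theorem rpow_neg_le_max_one_mul_rpow_neg {x T α β : ℝ} (hx : 0 < x) (hxT : x ≤ T)
    (hαβ : α ≤ β) (hβα : β ≤ α + 1) : x ^ (-α) ≤ max 1 T * x ^ (-β) := by
  calc x ^ (-α) = x ^ (β - α) * x ^ (-β) := by rw [← rpow_add hx]; ring_nf
    _ ≤ max 1 T ^ (β - α) * x ^ (-β) := by
        gcongr
        exact hxT.trans (le_max_right 1 T)
    _ ≤ max 1 T ^ (1 : ℝ) * x ^ (-β) := by
        gcongr
        · exact le_max_left 1 T
        · linarith
    _ = max 1 T * x ^ (-β) := by rw [rpow_one]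

section Grid

variable {i : ℕ} {σ τ : ℝ}

theorem add_one_mul_div_four_le (hi : 1 ≤ i) (hσ : 1 / 2 ≤ σ) (hτ : 0 < τ) :
    ((i : ℝ) + 1) * τ / 4 ≤ ((i : ℝ) + σ - 1) * τ := by
  have hi1 : (1 : ℝ) ≤ i := by exact_mod_cast hi
  nlinarith

theorem abs_log_mul_le_of_mem_Icc {v : ℝ} (hi : 1 ≤ i) (hσ : σ ∈ Icc (1 / 2 : ℝ) 1) (hτ : 0 < τ)
    (hv : v ∈ Icc ((i : ℝ) + σ - 1) ((i : ℝ) + σ + 1)) :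
    |log (v * τ)| ≤ |log (((i : ℝ) + 1) * τ)| + log 4 := by
  have hi1 : (1 : ℝ) ≤ i := by exact_mod_cast hi
  refine abs_log_le_abs_log_add_log (by positivity) (by norm_num)
    ((add_one_mul_div_four_le hi hσ.1 hτ).trans (by gcongr; exact hv.1)) ?_
  nlinarith [hv.2, hσ.2]

theorem rpow_neg_mul_rpow_neg_le {α β T : ℝ} (hi : 1 ≤ i) (hσ : 1 / 2 ≤ σ) (hτ : 0 < τ)
    (hiT : ((i : ℝ) + 1) * τ ≤ T) (hα : α ∈ Icc (0 : ℝ) 1) (hαβ : α ≤ β) (hβα : β ≤ α + 1) :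
    τ ^ (-α) * ((i : ℝ) + σ - 1) ^ (-α) ≤ 4 * (max 1 T * (((i : ℝ) + 1) * τ) ^ (-β)) := by
  have hi1 : (1 : ℝ) ≤ i := by exact_mod_cast hi
  rw [mul_comm, ← mul_rpow (by linarith) hτ.le]
  exact (rpow_neg_le_four_mul_rpow_neg (by positivity) (add_one_mul_div_four_le hi hσ hτ) hα).trans
    (by gcongr; exact rpow_neg_le_max_one_mul_rpow_neg (by positivity) hiT hαβ hβα)

end Grid

theorem stmt_9_general (αmin αmax T : ℝ)
    (h1 : 0 < αmin) (h3 : αmax < 1) :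
    ∃ C > (0 : ℝ), ∀ τ ∈ Set.Ioc (0 : ℝ) 1, ∀ i : ℕ, 1 ≤ i →
      ((i : ℝ) + 1) * τ ≤ T → ∀ α ∈ Set.Icc αmin αmax, ∀ σ ∈ Set.Icc (1/2 : ℝ) 1,
        |deriv (fun a => ai a σ τ i) α| + |deriv (fun s => ai α s τ i) σ| ≤
          C * (1 + |Real.log (((i : ℝ) + 1) * τ)|) *
            (((i : ℝ) + 1) * τ) ^ (-αmax) := by
  obtain ⟨B, hB, hgB⟩ :=
    contDiff_inv_Gamma_two_sub.exists_abs_le_and_abs_deriv_le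
      (isCompact_Icc (a := αmin) (b := αmax))
  refine ⟨32 * B * 7 * 4 * max 1 T, by positivity, ?_⟩
  rintro τ ⟨hτ, -⟩ i hi hiT α hα σ hσ
  obtain ⟨hg, hg'⟩ := hgB α hα
  have hα01 : α ∈ Icc (0 : ℝ) 1 := ⟨by linarith [hα.1], by linarith [hα.2]⟩
  have hc : 1 / 2 ≤ (i : ℝ) + σ - 1 := by
    have hi1 : (1 : ℝ) ≤ i := by exact_mod_cast hi
    linarith [hσ.1]
  have hlog4 : log 4 ≤ 3 := by linarith [log_le_sub_one_of_pos (by norm_num : (0 : ℝ) < 4)]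
  set x := ((i : ℝ) + 1) * τ
  set W := τ ^ (-α) * ((i : ℝ) + σ - 1) ^ (-α)
  calc _ ≤ 32 * B * (3 + (|log x| + log 4)) * W + 32 * B * W :=
        add_le_add (abs_deriv_ai_order_le hτ hα01 hc hg hg'
          fun v hv => abs_log_mul_le_of_mem_Icc hi hσ hτ hv) (abs_deriv_ai_sigma_le hτ hα01 hc hg)
    _ = 32 * B * (4 + |log x| + log 4) * W := by ring
    _ ≤ 32 * B * (7 * (1 + |log x|)) * (4 * (max 1 T * x ^ (-αmax))) := by
        gcongr
        · linarith [abs_nonneg (log x)]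
        · exact rpow_neg_mul_rpow_neg_le hi hσ.1 hτ hiT hα01 hα.2 (by linarith [hα.1])
    _ = _ := by ring

/-- the partial derivatives of `a_i` with respect to α and σ are
bounded by C·(1 + |log((i+1)τ)|)·((i+1)τ)^{−α_max}, uniformly in
τ ∈ (0,1], i ≥ 1 with (i+1)τ ≤ T, α ∈ [α_min,α_max], σ ∈ [1/2,1]. -/
theorem stmt_9 (αmin αmax T : ℝ)
    (h1 : 0 < αmin) (h2 : αmin ≤ αmax) (h3 : αmax < 1) (hT : 0 < T) :
    ∃ C > (0 : ℝ), ∀ τ ∈ Set.Ioc (0 : ℝ) 1, ∀ i : ℕ, 1 ≤ i →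
      ((i : ℝ) + 1) * τ ≤ T → ∀ α ∈ Set.Icc αmin αmax, ∀ σ ∈ Set.Icc (1/2 : ℝ) 1,
        |deriv (fun a => ai a σ τ i) α| + |deriv (fun s => ai α s τ i) σ| ≤
          C * (1 + |Real.log (((i : ℝ) + 1) * τ)|) *
            (((i : ℝ) + 1) * τ) ^ (-αmax) :=
  stmt_9_general αmin αmax T h1 h3
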